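/- arXiv:math/0008123 — 8 statements merged into one kernel-verified Lean document; each statement's English description precedes it below -/
import Mathlib

section
/- For every real y, g_{63}(y) = (1/3) sinh y - (2/3) sinh(y/2) cos(\sqrt{3} y / 2). -/
noncomputable def g6 (k : ℕ) (y : ℝ) : ℝ :=
  ∑' p : ℕ, y ^ (k + 6 * p) / ((k + 6 * p).factorial : ℝ)

/-!
Roots-of-unity filter: for a primitive `n`-th root of unity `ζ`, averaging
`exp (ζ ^ j * z) / (ζ ^ j) ^ k` over `j < n` keeps exactly the terms of the exponential series
whose exponent is `≡ k [MOD n]`. For `n = 6`, `k = 3` and `ω = e^{iπ/3}` one has `ω ^ 3 = -1`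
and `ω ^ 2 = ω - 1`, so the six exponentials pair into `2 (sinh z - sinh (ω z) - sinh (ω̄ z))`
with `ω̄ = 1 - ω`. For real `y` the last two terms are conjugate, each with real part
`sinh (y / 2) cos (√3 y / 2)`.
-/

open Finset Complex
open scoped Nat

theorem IsPrimitiveRoot.geom_sum_pow_div_pow {K : Type*} [Field K] {ζ : K} {n : ℕ}
    (hζ : IsPrimitiveRoot ζ n) (hn : n ≠ 0) (m k : ℕ) :
    ∑ j ∈ range n, (ζ ^ m / ζ ^ k) ^ j = if m ≡ k [MOD n] then (n : K) else 0 := by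
  have hζk : ζ ^ k ≠ 0 := pow_ne_zero _ (hζ.ne_zero hn)
  have hpow : ζ ^ m = ζ ^ k ↔ m ≡ k [MOD n] :=
    hζ.eq_orderOf ▸ (hζ.isOfFinOrder hn).pow_eq_pow_iff_modEq
  split_ifs with hmk
  · simp [hpow.mpr hmk, div_self hζk]
  · have hx : ζ ^ m / ζ ^ k ≠ 1 := fun h => hmk (hpow.mp ((div_eq_one_iff_eq hζk).mp h))
    rw [geom_sum_eq hx, div_pow, ← pow_mul, ← pow_mul, mul_comm m, mul_comm k, pow_mul, pow_mul,
      hζ.pow_eq_one]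
    simp

theorem IsPrimitiveRoot.hasSum_pow_add_mul_div_factorial {ζ : ℂ} {n k : ℕ}
    (hζ : IsPrimitiveRoot ζ n) (hk : k < n) (z : ℂ) :
    HasSum (fun p : ℕ => z ^ (k + n * p) / (k + n * p)!)
      ((n : ℂ)⁻¹ * ∑ j ∈ range n, exp (ζ ^ j * z) / (ζ ^ j) ^ k) := by
  have hn : n ≠ 0 := by omega
  have hexp : HasSum (fun m : ℕ => ∑ j ∈ range n, (ζ ^ j * z) ^ m / m ! / (ζ ^ j) ^ k)
      (∑ j ∈ range n, exp (ζ ^ j * z) / (ζ ^ j) ^ k) :=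
    hasSum_sum fun j _ => by
      rw [exp_eq_exp_ℂ]
      exact (NormedSpace.expSeries_div_hasSum_exp _).div_const _
  have hcoeff : ∀ m : ℕ, ∑ j ∈ range n, (ζ ^ j * z) ^ m / m ! / (ζ ^ j) ^ k
      = if m ≡ k [MOD n] then n * (z ^ m / m !) else 0 := by
    intro m
    calc _ = (∑ j ∈ range n, (ζ ^ m / ζ ^ k) ^ j) * (z ^ m / m !) := by
          rw [sum_mul]
          refine sum_congr rfl fun j _ => ?_
          rw [mul_pow, div_pow, ← pow_mul, ← pow_mul, ← pow_mul, ← pow_mul, mul_comm j m,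
            mul_comm j k]
          ring
      _ = _ := by rw [hζ.geom_sum_pow_div_pow hn]; split_ifs <;> simp
  simp_rw [hcoeff] at hexp
  have hinj : Function.Injective (fun p : ℕ => k + n * p) := fun a b h => by
    simpa [hn] using h
  rw [← hinj.hasSum_iff] at hexp
  · refine (hexp.mul_left (n : ℂ)⁻¹).congr_fun fun p => ?_
    have hp : k + n * p ≡ k [MOD n] := Nat.add_mul_mod_self_left k n p
    rw [Function.comp_apply, if_pos hp, ← mul_assoc, inv_mul_cancel₀ (by exact_mod_cast hn),
      one_mul]
  · intro m hm
    rw [if_neg]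
    intro hmk
    refine hm ⟨m / n, ?_⟩
    have hkn := Nat.mod_eq_of_lt hk
    change m % n = k % n at hmk
    change k + n * (m / n) = m
    have := Nat.div_add_mod m n
    omega

noncomputable def sixthRoot : ℂ := 1 / 2 + ((√3 / 2 : ℝ) : ℂ) * I

theorem sixthRoot_eq_exp : sixthRoot = exp (2 * Real.pi * I / 6) := by
  rw [show 2 * Real.pi * I / 6 = ((Real.pi / 3 : ℝ) : ℂ) * I by push_cast; ring, exp_mul_I,
    ← ofReal_cos, ← ofReal_sin, Real.cos_pi_div_three, Real.sin_pi_div_three, sixthRoot]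
  push_cast; ring

theorem isPrimitiveRoot_sixthRoot : IsPrimitiveRoot sixthRoot 6 :=
  sixthRoot_eq_exp ▸ isPrimitiveRoot_exp 6 (by norm_num)

theorem sixthRoot_sq : sixthRoot ^ 2 = sixthRoot - 1 := by
  have h3 : ((√3 : ℝ) : ℂ) ^ 2 = 3 := by norm_cast; simp
  rw [sixthRoot]; push_cast
  linear_combination (I ^ 2 / 4) * h3 + (3 / 4) * I_sq

theorem sixthRoot_pow_three : sixthRoot ^ 3 = -1 := by
  linear_combination (sixthRoot + 1) * sixthRoot_sq

theorem sum_exp_sixthRoot_pow_div (z : ℂ) :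
    ∑ j ∈ range 6, exp (sixthRoot ^ j * z) / (sixthRoot ^ j) ^ 3
      = 2 * (sinh z - sinh (sixthRoot * z) - sinh ((1 - sixthRoot) * z)) := by
  set ω := sixthRoot
  have hω2 := sixthRoot_sq
  have hω3 := sixthRoot_pow_three
  have hsign : ∀ j : ℕ, (ω ^ j) ^ 3 = (-1) ^ j := fun j => by
    rw [← pow_mul, mul_comm, pow_mul, hω3]
  have h2 : ω ^ 2 * z = -((1 - ω) * z) := by linear_combination z * hω2
  have h3 : ω ^ 3 * z = -z := by linear_combination z * hω3
  have h4 : ω ^ 4 * z = -(ω * z) := by linear_combination ω * z * hω3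
  have h5 : ω ^ 5 * z = (1 - ω) * z := by linear_combination (ω ^ 2 * z) * hω3 - z * hω2
  simp only [sum_range_succ, sum_range_zero, hsign, h2, h3, h4, h5, pow_zero, pow_one, one_mul]
  rw [mul_sub, mul_sub, two_sinh, two_sinh, two_sinh]
  ring

theorem re_sinh_add_mul_I (a b : ℝ) : (sinh (a + b * I)).re = Real.sinh a * Real.cos b := by
  simp [sinh_add, sinh_mul_I, cosh_mul_I, sinh_ofReal_re, cos_ofReal_re]

theorem hasSum_pow_three_add_six_mul_div_factorial (z : ℂ) :
    HasSum (fun p : ℕ => z ^ (3 + 6 * p) / (3 + 6 * p)!)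
      ((sinh z - sinh (sixthRoot * z) - sinh ((1 - sixthRoot) * z)) / 3) := by
  convert isPrimitiveRoot_sixthRoot.hasSum_pow_add_mul_div_factorial (by norm_num : 3 < 6) z using 1
  rw [sum_exp_sixthRoot_pow_div]
  push_cast
  ring

theorem sixthRoot_mul_ofReal (y : ℝ) : sixthRoot * y = ↑(y / 2) + ↑(√3 * y / 2) * I := by
  rw [sixthRoot]; push_cast; ring

theorem one_sub_sixthRoot_mul_ofReal (y : ℝ) :
    (1 - sixthRoot) * y = ↑(y / 2) + ↑(-(√3 * y / 2)) * I := by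
  rw [sixthRoot]; push_cast; ring

theorem ofReal_g6 (k : ℕ) (y : ℝ) :
    (g6 k y : ℂ) = ∑' p : ℕ, (y : ℂ) ^ (k + 6 * p) / (k + 6 * p)! := by
  rw [g6, ofReal_tsum]
  push_cast
  rfl

theorem g63_eq (y : ℝ) :
    g6 3 y = (1 / 3) * Real.sinh y
      - (2 / 3) * Real.sinh (y / 2) * Real.cos (Real.sqrt 3 * y / 2) := by
  have hg : (g6 3 y : ℂ) = (sinh y - sinh (sixthRoot * y) - sinh ((1 - sixthRoot) * y)) / 3 := by
    rw [ofReal_g6, (hasSum_pow_three_add_six_mul_div_factorial y).tsum_eq]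
  have hre := congrArg re hg
  rw [sixthRoot_mul_ofReal, one_sub_sixthRoot_mul_ofReal] at hre
  simp only [ofReal_re, div_ofNat_re, sub_re, sinh_ofReal_re, re_sinh_add_mul_I,
    Real.cos_neg] at hre
  rw [hre]
  ring
end

section
/- For every real y, g_{61}(y) = (1/3) sinh y + (1/3) sinh(y/2) cos(\sqrt{3} y/2) + (\sqrt{3}/3) cosh(y/2) sin(\sqrt{3} y/2). -/
open Complex Finset
open scoped Nat Real

theorem geom_sum_eq_ite_of_pow_eq_one {K : Type*} [Field K] [DecidableEq K] {w : K} {n : ℕ}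
    (hw : w ^ n = 1) : ∑ r ∈ range n, w ^ r = if w = 1 then (n : K) else 0 := by
  split_ifs with h
  · simp [h]
  · rw [geom_sum_eq h, hw, sub_self, zero_div]

theorem IsPrimitiveRoot.pow_eq_pow_iff_mod_eq {M : Type*} [CommMonoid M] {ζ : M} {n : ℕ}
    (hζ : IsPrimitiveRoot ζ n) (hn : n ≠ 0) {m k : ℕ} : ζ ^ m = ζ ^ k ↔ m % n = k % n := by
  rw [(hζ.isOfFinOrder hn).pow_inj_mod, ← hζ.eq_orderOf]

theorem Nat.mod_eq_iff_exists_add_mul {n k m : ℕ} (hk : k < n) :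
    m % n = k ↔ ∃ p, k + n * p = m := by
  constructor
  · rintro rfl
    exact ⟨m / n, Nat.mod_add_div m n⟩
  · rintro ⟨p, rfl⟩
    rw [Nat.add_mul_mod_self_left, Nat.mod_eq_of_lt hk]

theorem hasSum_exp_multisection {ζ : ℂ} {n k : ℕ} (hζ : IsPrimitiveRoot ζ n) (hk : k < n)
    (z : ℂ) :
    HasSum (fun p : ℕ => z ^ (k + n * p) / (k + n * p)!)
      ((1 / n) * ∑ r ∈ range n, (ζ ^ k)⁻¹ ^ r * cexp (ζ ^ r * z)) := by
  have hn : n ≠ 0 := by omega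
  have hsections : HasSum (fun m => ∑ r ∈ range n, (ζ ^ k)⁻¹ ^ r * ((ζ ^ r * z) ^ m / m !))
      (∑ r ∈ range n, (ζ ^ k)⁻¹ ^ r * cexp (ζ ^ r * z)) :=
    hasSum_sum fun r _ => by
      simpa [Complex.exp_eq_exp_ℂ] using
        (NormedSpace.expSeries_div_hasSum_exp (ζ ^ r * z)).mul_left ((ζ ^ k)⁻¹ ^ r)
  have hfilter (m : ℕ) : ∑ r ∈ range n, (ζ ^ k)⁻¹ ^ r * ((ζ ^ r * z) ^ m / m !)
      = n * Set.indicator (Set.range fun p => k + n * p) (fun m => z ^ m / m !) m := by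
    have hpow : (ζ ^ m / ζ ^ k) ^ n = 1 := by
      rw [div_pow, ← pow_mul, ← pow_mul, mul_comm m, mul_comm k, pow_mul, pow_mul,
        hζ.pow_eq_one, one_pow, one_pow, div_one]
    have hroot : ζ ^ m / ζ ^ k = 1 ↔ m ∈ Set.range fun p => k + n * p := by
      rw [div_eq_one_iff_eq (pow_ne_zero _ (hζ.ne_zero hn)), hζ.pow_eq_pow_iff_mod_eq hn,
        Nat.mod_eq_of_lt hk, Nat.mod_eq_iff_exists_add_mul hk, Set.mem_range]
    calc _ = (∑ r ∈ range n, (ζ ^ m / ζ ^ k) ^ r) * (z ^ m / m !) := by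
          rw [sum_mul]
          refine sum_congr rfl fun r _ => ?_
          ring
      _ = _ := by
        rw [geom_sum_eq_ite_of_pow_eq_one hpow]
        by_cases hm : m ∈ Set.range fun p => k + n * p
        · simp [hm, hroot.mpr hm]
        · simp [hm, mt hroot.mp hm]
  have hindicator := hsections.mul_left (1 / n : ℂ)
  simp only [hfilter, ← mul_assoc, one_div_mul_cancel (Nat.cast_ne_zero.mpr hn : (n : ℂ) ≠ 0),
    one_mul] at hindicator
  have hinj : Function.Injective fun p => k + n * p :=
    (add_right_injective k).comp (mul_right_injective₀ hn)
  exact hinj.hasSum_range_iff.mp (hasSum_subtype_iff_indicator.mpr hindicator)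

local notation "ω" => ((1 + √3 * I) / 2 : ℂ)

theorem exp_two_pi_mul_I_div_six : cexp (2 * π * I / 6) = ω := by
  rw [show 2 * π * I / 6 = ((π / 3 : ℝ) : ℂ) * I by push_cast; ring, exp_mul_I, ← ofReal_cos,
    ← ofReal_sin, Real.cos_pi_div_three, Real.sin_pi_div_three]
  push_cast
  ring

theorem isPrimitiveRoot_omega : IsPrimitiveRoot ω 6 := by
  simpa [← exp_two_pi_mul_I_div_six] using Complex.isPrimitiveRoot_exp 6 (by norm_num)

theorem omega_sq : ω ^ 2 = ω - 1 := by
  have hsqrt : (√3 : ℂ) ^ 2 = 3 := by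
    rw [← ofReal_pow, Real.sq_sqrt (by norm_num : (0 : ℝ) ≤ 3)]
    norm_num
  linear_combination (1 / 4 : ℂ) * I ^ 2 * hsqrt + (3 / 4 : ℂ) * I_sq

theorem omega_inv : ω⁻¹ = 1 - ω :=
  inv_eq_of_mul_eq_one_right (by linear_combination -omega_sq)

theorem sum_omega_inv_pow_mul_exp (z : ℂ) :
    1 / 6 * ∑ r ∈ range 6, (ω ^ 1)⁻¹ ^ r * cexp (ω ^ r * z)
      = 1 / 3 * sinh z + 1 / 3 * sinh (z / 2) * cos (√3 * z / 2)
        + √3 / 3 * cosh (z / 2) * sin (√3 * z / 2) := by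
  set b := √3 * z / 2
  have hmul1 : ω * z = z / 2 + b * I := by ring
  have hmul2 : ω ^ 2 * z = -(z / 2) + b * I := by rw [omega_sq]; ring
  have hmul3 : ω ^ 3 * z = -z := by linear_combination (ω + 1) * z * omega_sq
  have hmul4 : ω ^ 4 * z = -(z / 2) + -b * I := by
    linear_combination ω * (ω + 1) * z * omega_sq
  have hmul5 : ω ^ 5 * z = z / 2 + -b * I := by
    linear_combination (ω ^ 3 + ω ^ 2 - 1) * z * omega_sq
  have hinv2 : (1 - ω) ^ 2 = -ω := by linear_combination omega_sq
  have hinv3 : (1 - ω) ^ 3 = -1 := by linear_combination (2 - ω) * omega_sq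
  have hinv4 : (1 - ω) ^ 4 = ω - 1 := by linear_combination (1 - ω) * (2 - ω) * omega_sq
  have hinv5 : (1 - ω) ^ 5 = ω := by linear_combination ((1 - ω) ^ 2 * (2 - ω) - 1) * omega_sq
  simp only [sum_range_succ, sum_range_zero, pow_zero, pow_one, one_mul, zero_add, omega_inv,
    hmul1, hmul2, hmul3, hmul4, hmul5, hinv2, hinv3, hinv4, hinv5, exp_add_mul_I,
    Complex.cos_neg, Complex.sin_neg]
  rw [Complex.sinh, Complex.sinh, Complex.cosh]
  -- `ω` enters only linearly now, so `I ^ 2 = -1` is the one relation left to use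
  linear_combination -(√3 * sin b * (cexp (z / 2) + cexp (-(z / 2)))) / 6 * I_sq

theorem g61_eq (y : ℝ) :
    g6 1 y = (1 / 3) * Real.sinh y
      + (1 / 3) * Real.sinh (y / 2) * Real.cos (Real.sqrt 3 * y / 2)
      + (Real.sqrt 3 / 3) * Real.cosh (y / 2) * Real.sin (Real.sqrt 3 * y / 2) := by
  apply ofReal_injective
  have hseries := hasSum_exp_multisection isPrimitiveRoot_omega (by norm_num : 1 < 6) (y : ℂ)
  push_cast at hseries ⊢
  rw [← sum_omega_inv_pow_mul_exp, ← hseries.tsum_eq, g6, ofReal_tsum]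
  push_cast
  rfl
end

section
/- For every real y, the sum of squares of the six polar 6-dimensional cosexponential functions satisfies \sum_{k=0}^{5} g_{6k}(y)^2 = (1/3) cosh(2y) + (2/3) cosh(y). -/
namespace G6Aux

open Finset

/-- Binomial sums filtered by the condition `2 m ≡ N + r (mod 6)`. -/
noncomputable def F (r : ZMod 6) (N : ℕ) : ℝ :=
  ∑ m ∈ Finset.range (N + 1),
    if 2 * (m : ZMod 6) = (N : ZMod 6) + r then (N.choose m : ℝ) else 0

lemma F_succ (r : ZMod 6) (N : ℕ) : F r (N + 1) = F (r - 1) N + F (r + 1) N := by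
  unfold F
  rw [Finset.sum_range_succ']
  have ht : ∀ i ∈ Finset.range (N + 1),
      (if 2 * ((i + 1 : ℕ) : ZMod 6) = ((N + 1 : ℕ) : ZMod 6) + r
          then ((N + 1).choose (i + 1) : ℝ) else 0)
      = (if 2 * (i : ZMod 6) = (N : ZMod 6) + (r - 1) then (N.choose i : ℝ) else 0)
        + (if 2 * ((i + 1 : ℕ) : ZMod 6) = (N : ZMod 6) + (r + 1)
            then (N.choose (i + 1) : ℝ) else 0) := by
    intro i _
    have hc : (2 * ((i + 1 : ℕ) : ZMod 6) = ((N + 1 : ℕ) : ZMod 6) + r)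
        ↔ (2 * (i : ZMod 6) = (N : ZMod 6) + (r - 1)) := by
      push_cast
      constructor <;> intro h <;> linear_combination h
    have hc2 : (2 * ((i + 1 : ℕ) : ZMod 6) = ((N + 1 : ℕ) : ZMod 6) + r)
        ↔ (2 * ((i + 1 : ℕ) : ZMod 6) = (N : ZMod 6) + (r + 1)) := by
      push_cast
      constructor <;> intro h <;> linear_combination h
    by_cases h : 2 * ((i + 1 : ℕ) : ZMod 6) = ((N + 1 : ℕ) : ZMod 6) + r
    · rw [if_pos h, if_pos (hc.mp h), if_pos (hc2.mp h), Nat.choose_succ_succ]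
      push_cast
      ring
    · rw [if_neg h, if_neg (fun hh => h (hc.mpr hh)), if_neg (fun hh => h (hc2.mpr hh))]
      ring
  rw [Finset.sum_congr rfl ht, Finset.sum_add_distrib]
  have hB : (∑ i ∈ Finset.range (N + 1),
        if 2 * ((i + 1 : ℕ) : ZMod 6) = (N : ZMod 6) + (r + 1)
          then (N.choose (i + 1) : ℝ) else 0)
      + (if 2 * ((0 : ℕ) : ZMod 6) = ((N + 1 : ℕ) : ZMod 6) + r
          then ((N + 1).choose 0 : ℝ) else 0)
      = ∑ m ∈ Finset.range (N + 1),
          if 2 * (m : ZMod 6) = (N : ZMod 6) + (r + 1) then (N.choose m : ℝ) else 0 := by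
    rw [show ∑ m ∈ Finset.range (N + 1),
          (if 2 * (m : ZMod 6) = (N : ZMod 6) + (r + 1) then (N.choose m : ℝ) else 0)
        = (∑ i ∈ Finset.range N,
            if 2 * ((i + 1 : ℕ) : ZMod 6) = (N : ZMod 6) + (r + 1)
              then (N.choose (i + 1) : ℝ) else 0)
          + (if 2 * ((0 : ℕ) : ZMod 6) = (N : ZMod 6) + (r + 1)
              then (N.choose 0 : ℝ) else 0) from Finset.sum_range_succ' _ N]
    rw [Finset.sum_range_succ]
    have hz : (if 2 * ((N + 1 : ℕ) : ZMod 6) = (N : ZMod 6) + (r + 1)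
        then (N.choose (N + 1) : ℝ) else 0) = 0 := by
      simp [Nat.choose_succ_self]
    rw [hz, add_zero]
    congr 1
    have hcond : (2 * ((0 : ℕ) : ZMod 6) = ((N + 1 : ℕ) : ZMod 6) + r)
        ↔ (2 * ((0 : ℕ) : ZMod 6) = (N : ZMod 6) + (r + 1)) := by
      push_cast
      constructor <;> intro h <;> linear_combination h
    simp only [Nat.choose_zero_right]
    exact if_congr hcond rfl rfl
  rw [add_assoc, hB]

lemma F_closed (N : ℕ) :
    F 0 N = (2 ^ N + (-2 : ℝ) ^ N + 2 + 2 * (-1 : ℝ) ^ N) / 6 ∧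
    F 1 N = (2 ^ N - (-2 : ℝ) ^ N + 1 - (-1 : ℝ) ^ N) / 6 ∧
    F 2 N = (2 ^ N + (-2 : ℝ) ^ N - 1 - (-1 : ℝ) ^ N) / 6 ∧
    F 3 N = (2 ^ N - (-2 : ℝ) ^ N - 2 + 2 * (-1 : ℝ) ^ N) / 6 ∧
    F 4 N = (2 ^ N + (-2 : ℝ) ^ N - 1 - (-1 : ℝ) ^ N) / 6 ∧
    F 5 N = (2 ^ N - (-2 : ℝ) ^ N + 1 - (-1 : ℝ) ^ N) / 6 := by
  induction N with
  | zero =>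
      refine ⟨?_, ?_, ?_, ?_, ?_, ?_⟩ <;>
        · simp only [F, Finset.sum_range_one, Nat.cast_zero, Nat.choose_zero_right,
            Nat.cast_one, mul_zero, zero_add]
          first
          | (rw [if_pos (by decide)]; norm_num)
          | (rw [if_neg (by decide)]; norm_num)
  | succ N ih =>
      obtain ⟨h0, h1, h2, h3, h4, h5⟩ := ih
      refine ⟨?_, ?_, ?_, ?_, ?_, ?_⟩
      · rw [F_succ, show (0 : ZMod 6) - 1 = 5 by decide, show (0 : ZMod 6) + 1 = 1 by decide,
          h5, h1]; ring
      · rw [F_succ, show (1 : ZMod 6) - 1 = 0 by decide, show (1 : ZMod 6) + 1 = 2 by decide,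
          h0, h2]; ring
      · rw [F_succ, show (2 : ZMod 6) - 1 = 1 by decide, show (2 : ZMod 6) + 1 = 3 by decide,
          h1, h3]; ring
      · rw [F_succ, show (3 : ZMod 6) - 1 = 2 by decide, show (3 : ZMod 6) + 1 = 4 by decide,
          h2, h4]; ring
      · rw [F_succ, show (4 : ZMod 6) - 1 = 3 by decide, show (4 : ZMod 6) + 1 = 5 by decide,
          h3, h5]; ring
      · rw [F_succ, show (5 : ZMod 6) - 1 = 4 by decide, show (5 : ZMod 6) + 1 = 0 by decide,
          h4, h0]; ring

end G6Aux

theorem g6_sum_sq (y : ℝ) :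
    ∑ k ∈ Finset.range 6, (g6 k y) ^ 2
      = (1 / 3) * Real.cosh (2 * y) + (2 / 3) * Real.cosh y := by
  classical
  set e : ℕ → ℝ := fun n => y ^ n / n.factorial with he
  have heabs : ∀ n, |e n| = |y| ^ n / n.factorial := by
    intro n
    simp [he, abs_div, abs_pow, Nat.abs_cast]
  have hesum : Summable fun n => |e n| := by
    refine (Real.summable_pow_div_factorial |y|).congr fun n => (heabs n).symm
  set h : ℕ → ℕ → ℝ := fun k n => if n % 6 = k then e n else 0 with hh
  have hhnorm : ∀ k, Summable fun n => ‖h k n‖ := by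
    intro k
    refine Summable.of_nonneg_of_le (fun n => norm_nonneg _) (fun n => ?_) hesum
    by_cases hk : n % 6 = k <;> simp [hh, hk, abs_nonneg]
  -- Step A : g6 k y = ∑' n, h k n for k < 6
  have hA : ∀ k < 6, g6 k y = ∑' n, h k n := by
    intro k hk
    have hinj : Function.Injective fun p : ℕ => k + 6 * p := by
      intro p q hpq
      simp only at hpq
      omega
    have hsupp : Function.support (h k) ⊆ Set.range fun p : ℕ => k + 6 * p := by
      intro n hn
      have hmod : n % 6 = k := by
        by_contra hc; exact hn (by simp [hh, hc])
      exact ⟨n / 6, by simp only; omega⟩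
    have := Function.Injective.tsum_eq hinj hsupp
    rw [← this]
    unfold g6
    refine tsum_congr fun p => ?_
    have hmod : (k + 6 * p) % 6 = k := by omega
    simp [hh, hmod, he]
  -- Step B : Cauchy product
  have hB : ∀ k, (∑' n, h k n) ^ 2
      = ∑' N : ℕ, ∑ m ∈ Finset.range (N + 1), h k m * h k (N - m) := by
    intro k
    rw [sq]
    exact tsum_mul_tsum_eq_tsum_sum_range_of_summable_norm (hhnorm k) (hhnorm k)
  have hCk : ∀ k, Summable fun N : ℕ => ∑ m ∈ Finset.range (N + 1), h k m * h k (N - m) :=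
    fun k => (summable_norm_sum_mul_range_of_summable_norm (hhnorm k) (hhnorm k)).of_norm
  have hLHS : ∑ k ∈ Finset.range 6, (g6 k y) ^ 2
      = ∑' N : ℕ, ∑ k ∈ Finset.range 6, ∑ m ∈ Finset.range (N + 1), h k m * h k (N - m) := by
    rw [Summable.tsum_finsetSum fun k _ => hCk k]
    refine Finset.sum_congr rfl fun k hk => ?_
    rw [hA k (Finset.mem_range.mp hk), hB k]
  rw [hLHS]
  -- Step D : identify the N-th coefficient
  have hD : ∀ N : ℕ, ∑ k ∈ Finset.range 6, ∑ m ∈ Finset.range (N + 1), h k m * h k (N - m)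
      = y ^ N / N.factorial * G6Aux.F 0 N := by
    intro N
    rw [Finset.sum_comm]
    unfold G6Aux.F
    rw [Finset.mul_sum]
    refine Finset.sum_congr rfl fun m hm => ?_
    have hmN : m ≤ N := by
      have := Finset.mem_range.mp hm; omega
    have hterm : ∀ k, h k m * h k (N - m)
        = if k = m % 6 then (if m % 6 = (N - m) % 6 then e m * e (N - m) else 0) else 0 := by
      intro k
      simp only [hh]
      split_ifs <;> first | ring1 | (exfalso; omega)
    have hsum : ∑ k ∈ Finset.range 6, h k m * h k (N - m)
        = if m % 6 = (N - m) % 6 then e m * e (N - m) else 0 := by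
      rw [Finset.sum_congr rfl fun k _ => hterm k]
      rw [Finset.sum_ite_eq' (Finset.range 6) (m % 6)]
      rw [if_pos (Finset.mem_range.mpr (Nat.mod_lt m (by norm_num)))]
    rw [hsum]
    have hcond : (m % 6 = (N - m) % 6) ↔ (2 * (m : ZMod 6) = (N : ZMod 6) + 0) := by
      rw [← ZMod.natCast_eq_natCast_iff' m (N - m) 6]
      have hcast : ((N - m : ℕ) : ZMod 6) = (N : ZMod 6) - (m : ZMod 6) := by
        push_cast [hmN]; ring
      constructor
      · intro hx
        rw [hcast] at hx
        linear_combination hx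
      · intro hx
        rw [hcast]
        linear_combination hx
    have hval : e m * e (N - m) = y ^ N / N.factorial * (N.choose m : ℝ) := by
      rw [he]
      have hNadd : m + (N - m) = N := by omega
      have hfac : (N.factorial : ℝ) ≠ 0 := Nat.cast_ne_zero.mpr N.factorial_ne_zero
      have hfm : (m.factorial : ℝ) ≠ 0 := Nat.cast_ne_zero.mpr m.factorial_ne_zero
      have hfnm : ((N - m).factorial : ℝ) ≠ 0 := Nat.cast_ne_zero.mpr (N - m).factorial_ne_zero
      have hpow : y ^ N = y ^ m * y ^ (N - m) := by rw [← pow_add, hNadd]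
      rw [Nat.cast_choose ℝ hmN, hpow]
      field_simp
      try ring
    by_cases hc : m % 6 = (N - m) % 6
    · rw [if_pos hc, if_pos (hcond.mp hc), hval]
    · rw [if_neg hc, if_neg (fun hx => hc (hcond.mpr hx)), mul_zero]
  rw [tsum_congr hD]
  have hF0 : ∀ N : ℕ, G6Aux.F 0 N
      = (2 ^ N + (-2 : ℝ) ^ N + 2 + 2 * (-1 : ℝ) ^ N) / 6 :=
    fun N => (G6Aux.F_closed N).1
  rw [tsum_congr fun N => by rw [hF0 N]]
  -- Step F : sum the exponential series
  have hexp : ∀ x : ℝ, Real.exp x = ∑' n : ℕ, x ^ n / n.factorial := by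
    intro x
    rw [Real.exp_eq_exp_ℝ, NormedSpace.exp_eq_tsum_div]
  have hterm : ∀ N : ℕ, y ^ N / N.factorial
        * ((2 ^ N + (-2 : ℝ) ^ N + 2 + 2 * (-1 : ℝ) ^ N) / 6)
      = (1 / 6) * ((2 * y) ^ N / N.factorial) + (1 / 6) * ((-(2 * y)) ^ N / N.factorial)
        + ((1 / 3) * (y ^ N / N.factorial) + (1 / 3) * ((-y) ^ N / N.factorial)) := by
    intro N
    have h1 : (2 * y) ^ N = 2 ^ N * y ^ N := mul_pow 2 y N
    have h2 : (-(2 * y)) ^ N = (-2 : ℝ) ^ N * y ^ N := by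
      rw [show -(2 * y) = (-2 : ℝ) * y by ring, mul_pow]
    have h3 : (-y) ^ N = (-1 : ℝ) ^ N * y ^ N := by
      rw [show -y = (-1 : ℝ) * y by ring, mul_pow]
    rw [h1, h2, h3]
    ring
  rw [tsum_congr hterm]
  have s1 : Summable fun N : ℕ => (1 / 6 : ℝ) * ((2 * y) ^ N / N.factorial) :=
    (Real.summable_pow_div_factorial (2 * y)).mul_left _
  have s2 : Summable fun N : ℕ => (1 / 6 : ℝ) * ((-(2 * y)) ^ N / N.factorial) :=
    (Real.summable_pow_div_factorial (-(2 * y))).mul_left _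
  have s3 : Summable fun N : ℕ => (1 / 3 : ℝ) * (y ^ N / N.factorial) :=
    (Real.summable_pow_div_factorial y).mul_left _
  have s4 : Summable fun N : ℕ => (1 / 3 : ℝ) * ((-y) ^ N / N.factorial) :=
    (Real.summable_pow_div_factorial (-y)).mul_left _
  rw [Summable.tsum_add (s1.add s2) (s3.add s4), Summable.tsum_add s1 s2, Summable.tsum_add s3 s4,
    tsum_mul_left, tsum_mul_left, tsum_mul_left, tsum_mul_left,
    ← hexp (2 * y), ← hexp (-(2 * y)), ← hexp y, ← hexp (-y)]
  rw [Real.cosh_eq, Real.cosh_eq]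
  ring
end

section
/- For every real y, f_{60}(y) = (1/3) cos y + (2/3) cosh(\sqrt{3} y / 2) cos(y/2). -/
noncomputable def f6 (k : ℕ) (y : ℝ) : ℝ :=
  ∑' p : ℕ, (-1 : ℝ) ^ p * y ^ (k + 6 * p) / ((k + 6 * p).factorial : ℝ)

open Complex in
private lemma f60_key (y : ℝ) :
    HasSum (fun p : ℕ => (-1 : ℝ) ^ p * y ^ (6 * p) / ((6 * p).factorial : ℝ))
      ((1 / 3) * Real.cos y
        + (2 / 3) * Real.cosh (Real.sqrt 3 * y / 2) * Real.cos (y / 2)) := by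
  set s : ℝ := Real.sqrt 3 with hs_def
  have hs : s ^ 2 = 3 := Real.sq_sqrt (by norm_num)
  have hsC : (s : ℂ) ^ 2 = 3 := by exact_mod_cast congrArg (fun x : ℝ => (x : ℂ)) hs
  set w : ℂ := ((s * y / 2 : ℝ) : ℂ) + ((y / 2 : ℝ) : ℂ) * I with hw
  set u : ℂ := ((1 / 2 : ℝ) : ℂ) + ((s / 2 : ℝ) : ℂ) * I with hu
  have hw2 : w ^ 2 = (y : ℂ) ^ 2 * u := by
    rw [hw, hu]
    push_cast
    linear_combination ((y : ℂ) ^ 2 / 4) * hsC + ((y : ℂ) ^ 2 / 4) * Complex.I_sq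
  have hu3 : u ^ 3 = -1 := by
    rw [hu]
    push_cast
    linear_combination (-(3 : ℂ)/8 - (s : ℂ)/8 * I) * hsC
      + ((3 * (s : ℂ) ^ 2)/8 + ((s : ℂ) ^ 3/8) * I) * Complex.I_sq
  -- real part of cosh w
  have hcosh : (Complex.cosh w).re = Real.cosh (s * y / 2) * Real.cos (y / 2) := by
    have hc : Complex.cosh w = ((Real.cosh (s * y / 2) * Real.cos (y / 2) : ℝ) : ℂ)
        + ((Real.sinh (s * y / 2) * Real.sin (y / 2) : ℝ) : ℂ) * I := by
      rw [hw, Complex.cosh_add, Complex.cosh_mul_I, Complex.sinh_mul_I,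
        ← Complex.ofReal_cosh, ← Complex.ofReal_cos, ← Complex.ofReal_sinh, ← Complex.ofReal_sin]
      push_cast
      ring
    rw [hc, Complex.add_re, Complex.ofReal_re, Complex.mul_re, Complex.ofReal_re,
      Complex.ofReal_im, Complex.I_re, Complex.I_im]
    ring
  -- HasSum for cosh w
  have h1 : HasSum (fun n : ℕ => w ^ (2 * n) / ((2 * n).factorial : ℂ)) (Complex.cosh w) := by
    have h := Complex.hasSum_cos' (w * I)
    rw [Complex.cos_mul_I] at h
    have hneg : w * I * I = -w := by rw [mul_assoc, Complex.I_mul_I, mul_neg_one]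
    simpa [hneg, pow_mul, neg_sq] using h
  have h2 : HasSum (fun n : ℕ => y ^ (2 * n) * (u ^ n).re / ((2 * n).factorial : ℝ))
      (Real.cosh (s * y / 2) * Real.cos (y / 2)) := by
    have h := Complex.hasSum_re h1
    rw [hcosh] at h
    refine h.congr_fun fun n => ?_
    rw [show w ^ (2 * n) = ((y ^ (2 * n) : ℝ) : ℂ) * u ^ n by
      rw [pow_mul w, hw2]; push_cast; rw [mul_pow, pow_mul]]
    rw [mul_div_assoc,
      show (((2 * n).factorial : ℂ)) = (((2 * n).factorial : ℝ) : ℂ) by push_cast; ring,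
      Complex.div_ofReal_re, Complex.re_ofReal_mul]
    ring
  have hA := Real.hasSum_cos y
  have hsum : HasSum
      (fun n : ℕ => ((1 / 3 : ℝ) * (-1) ^ n + (2 / 3) * (u ^ n).re)
        * (y ^ (2 * n) / ((2 * n).factorial : ℝ)))
      ((1 / 3) * Real.cos y
        + (2 / 3) * (Real.cosh (s * y / 2) * Real.cos (y / 2))) := by
    have h := (hA.mul_left (1 / 3)).add (h2.mul_left (2 / 3))
    refine h.congr_fun fun n => ?_
    ring
  have hcoe : ∀ n : ℕ, (1 / 3 : ℝ) * (-1) ^ n + (2 / 3) * ((u : ℂ) ^ n).re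
      = if 3 ∣ n then (-1 : ℝ) ^ (n / 3) else 0 := by
    intro n
    obtain ⟨q, r, hr, rfl⟩ : ∃ q r, r < 3 ∧ n = 3 * q + r :=
      ⟨n / 3, n % 3, Nat.mod_lt _ (by norm_num), by omega⟩
    have hup : u ^ (3 * q + r) = (((-1 : ℝ) ^ q : ℝ) : ℂ) * u ^ r := by
      rw [pow_add, pow_mul, hu3]
      push_cast
      ring
    rw [hup, Complex.re_ofReal_mul, pow_add, pow_mul]
    have hre0 : (u ^ 0).re = 1 := by simp
    have hre1 : (u ^ 1).re = 1 / 2 := by rw [hu]; simp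
    have hre2 : (u ^ 2).re = -(1 / 2) := by
      rw [hu]
      simp [pow_two, Complex.mul_re]
      nlinarith [hs]
    interval_cases r
    · rw [hre0, if_pos ⟨q, by omega⟩, show (3 * q + 0) / 3 = q by omega]
      ring_nf
    · rw [hre1, if_neg (by omega)]
      ring_nf
    · rw [hre2, if_neg (by omega)]
      ring_nf
  simp only [hcoe] at hsum
  have hinj : Function.Injective (fun p : ℕ => 3 * p) := fun a b h => by
    simpa using h
  have hfinal := (Function.Injective.hasSum_iff (f := fun n : ℕ =>
      (if 3 ∣ n then (-1 : ℝ) ^ (n / 3) else 0) * (y ^ (2 * n) / ((2 * n).factorial : ℝ)))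
      hinj (fun n hn => by
        have hnd : ¬ 3 ∣ n := by
          rintro ⟨c, rfl⟩
          exact hn ⟨c, rfl⟩
        simp [hnd])).mpr hsum
  have hres := hfinal.congr_fun (g := fun p : ℕ =>
      (-1 : ℝ) ^ p * y ^ (6 * p) / ((6 * p).factorial : ℝ)) fun p => by
    simp only [Function.comp]
    rw [if_pos ⟨p, rfl⟩, show (3 * p) / 3 = p by omega, show 2 * (3 * p) = 6 * p by ring]
    ring
  simpa [mul_assoc] using hres

theorem f60_eq (y : ℝ) :
    f6 0 y = (1 / 3) * Real.cos y
      + (2 / 3) * Real.cosh (Real.sqrt 3 * y / 2) * Real.cos (y / 2) := by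
  have h := (f60_key y).tsum_eq
  simp only [f6, zero_add]
  rw [h]
end

section
/- For every real y, f_{63}(y) = -(1/3) sin y + (2/3) cosh(\sqrt{3} y / 2) sin(y/2). -/
/-!
Roots-of-unity filter: with `ω = e^{iπ/3}` a primitive sixth root of unity and `α = e^{iπ/6}`,
so that `α³ = i` and `α⁶ = -1`, averaging `(-1)^j exp (ω^j α y)` over `j < 6` keeps exactly
the terms `(α y)^(3 + 6p) / (3 + 6p)! = i (-1)^p y^(3 + 6p) / (3 + 6p)!` of the exponential
series, so the average is `i f₆₃(y)`. Since `ω³ = -1` the six exponentials pair into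
`2 (sinh (α y) - sinh (i y) + sinh (-ᾱ y))`, and finally
`sinh (a + ib) + sinh (-a + ib) = 2i cosh a sin b`.
-/

open Complex Finset Nat

theorem IsPrimitiveRoot.sum_inv_pow_mul_pow_pow {K : Type*} [Field K] {ω : K} {N : ℕ}
    (hω : IsPrimitiveRoot ω N) (k n : ℕ) :
    ∑ j ∈ range N, ((ω ^ k)⁻¹ * ω ^ n) ^ j = if n ≡ k [MOD N] then (N : K) else 0 := by
  rcases N.eq_zero_or_pos with rfl | hN
  · simp
  have hone : (ω ^ k)⁻¹ * ω ^ n = 1 ↔ n ≡ k [MOD N] := by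
    rw [inv_mul_eq_one₀ (pow_ne_zero _ (hω.ne_zero hN.ne')), eq_comm,
      (hω.isOfFinOrder hN.ne').pow_eq_pow_iff_modEq, ← hω.eq_orderOf]
  split_ifs with hnk
  · simp [hone.mpr hnk]
  · have hpow : ((ω ^ k)⁻¹ * ω ^ n) ^ N = 1 := by
      rw [mul_pow, inv_pow, ← pow_mul, ← pow_mul, pow_mul', pow_mul' ω n, hω.pow_eq_one,
        one_pow, one_pow, inv_one, one_mul]
    rw [geom_sum_eq (mt hone.mp hnk), hpow, sub_self, zero_div]

theorem Complex.hasSum_pow_div_factorial (z : ℂ) : HasSum (fun n => z ^ n / n !) (exp z) := by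
  rw [exp_eq_exp_ℂ]
  exact NormedSpace.expSeries_div_hasSum_exp z

theorem IsPrimitiveRoot.hasSum_pow_div_factorial_add_mul {ω : ℂ} {N k : ℕ}
    (hω : IsPrimitiveRoot ω N) (hk : k < N) (z : ℂ) :
    HasSum (fun p => z ^ (k + N * p) / (k + N * p)!)
      ((N : ℂ)⁻¹ * ∑ j ∈ range N, (ω ^ k)⁻¹ ^ j * exp (ω ^ j * z)) := by
  have hN : N ≠ 0 := (k.zero_le.trans_lt hk).ne'
  have hsum := (hasSum_sum (s := range N) fun j _ =>
    (hasSum_pow_div_factorial (ω ^ j * z)).mul_left ((ω ^ k)⁻¹ ^ j)).mul_left (N : ℂ)⁻¹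
  have hterm (n : ℕ) :
      (N : ℂ)⁻¹ * ∑ j ∈ range N, (ω ^ k)⁻¹ ^ j * ((ω ^ j * z) ^ n / n !) =
        if n ≡ k [MOD N] then z ^ n / n ! else 0 :=
    calc (N : ℂ)⁻¹ * ∑ j ∈ range N, (ω ^ k)⁻¹ ^ j * ((ω ^ j * z) ^ n / n !)
        = (N : ℂ)⁻¹ * (∑ j ∈ range N, ((ω ^ k)⁻¹ * ω ^ n) ^ j) * (z ^ n / n !) := by
          rw [mul_assoc, sum_mul]
          congr 1
          exact sum_congr rfl fun j _ => by ring
      _ = _ := by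
          rw [hω.sum_inv_pow_mul_pow_pow]
          split_ifs
          · rw [inv_mul_cancel₀ (by exact_mod_cast hN), one_mul]
          · rw [mul_zero, zero_mul]
  simp only [hterm] at hsum
  have hinj : Function.Injective fun p => k + N * p := fun p q hpq => by simpa [hN] using hpq
  rw [← hinj.hasSum_iff] at hsum
  · refine hsum.congr_fun fun p => ?_
    simp [Nat.ModEq, Nat.mod_eq_of_lt hk]
  · intro n hn
    refine if_neg fun hnk => hn ⟨n / N, ?_⟩
    have := Nat.mod_add_div n N
    rwa [hnk, Nat.mod_eq_of_lt hk] at this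

theorem isPrimitiveRoot_one_add_sqrt_three_mul_I_div_two :
    IsPrimitiveRoot ((1 + √3 * I) / 2) 6 := by
  convert isPrimitiveRoot_exp 6 (by norm_num) using 1
  have h : 2 * Real.pi * I / (6 : ℕ) = ((Real.pi / 3 : ℝ) : ℂ) * I := by push_cast; ring
  rw [h, exp_mul_I, ← ofReal_cos, ← ofReal_sin, Real.cos_pi_div_three, Real.sin_pi_div_three]
  push_cast
  ring

theorem sum_range_six_neg_one_pow_mul_exp {ω : ℂ} (hω : ω ^ 3 = -1) (z : ℂ) :
    ∑ j ∈ range 6, (-1) ^ j * exp (ω ^ j * z) =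
      2 * (sinh z - sinh (ω * z) + sinh (ω ^ 2 * z)) := by
  have h4 : ω ^ 4 = -ω := by rw [pow_succ, hω, neg_one_mul]
  have h5 : ω ^ 5 = -ω ^ 2 := by rw [pow_succ, h4, neg_mul, ← pow_two]
  simp only [sum_range_succ, range_zero, sum_empty, hω, h4, h5, neg_mul, one_mul, pow_zero,
    pow_one, Complex.sinh]
  ring

theorem sinh_add_mul_I_add_sinh_neg_add_mul_I (a b : ℂ) :
    sinh (a + b * I) + sinh (-a + b * I) = 2 * cosh a * sin b * I := by
  rw [sinh_add, sinh_add, sinh_neg, cosh_neg, sinh_mul_I]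
  ring

theorem one_add_sqrt_three_mul_I_div_two_pow_three : ((1 + √3 * I) / 2) ^ 3 = -1 :=
  (isPrimitiveRoot_one_add_sqrt_three_mul_I_div_two.pow_of_dvd three_ne_zero
    (by norm_num)).eq_neg_one_of_two_right

theorem ofReal_sqrt_three_sq : ((√3 : ℝ) : ℂ) ^ 2 = 3 := by
  exact_mod_cast Real.sq_sqrt zero_le_three

theorem sqrt_three_add_I_div_two_pow_three : ((√3 + I) / 2 : ℂ) ^ 3 = I := by
  linear_combination (√3 + 3 * I) / 8 * ofReal_sqrt_three_sq + (3 * √3 + I) / 8 * I_sq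

theorem sum_range_six_neg_one_pow_mul_exp_sqrt_three_add_I_div_two (y : ℝ) :
    ∑ j ∈ range 6, (-1) ^ j * exp (((1 + √3 * I) / 2) ^ j * ((√3 + I) / 2 * y)) =
      ((-2 * Real.sin y + 4 * Real.cosh (√3 * y / 2) * Real.sin (y / 2) : ℝ) : ℂ) * I := by
  have hz0 : (√3 + I) / 2 * y = ((√3 * y / 2 : ℝ) : ℂ) + ((y / 2 : ℝ) : ℂ) * I := by
    push_cast; ring
  have hz1 : (1 + √3 * I) / 2 * ((√3 + I) / 2 * y) = (y : ℂ) * I := by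
    linear_combination (I * y / 4) * ofReal_sqrt_three_sq + (√3 * y / 4 : ℂ) * I_sq
  have hz2 : ((1 + √3 * I) / 2) ^ 2 * ((√3 + I) / 2 * y) =
      -((√3 * y / 2 : ℝ) : ℂ) + ((y / 2 : ℝ) : ℂ) * I := by
    rw [pow_two, mul_assoc, hz1]
    push_cast
    linear_combination (√3 * y / 2 : ℂ) * I_sq
  rw [sum_range_six_neg_one_pow_mul_exp one_add_sqrt_three_mul_I_div_two_pow_three,
    hz1, hz2, hz0, sub_add_eq_add_sub, sinh_add_mul_I_add_sinh_neg_add_mul_I, sinh_mul_I]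
  push_cast
  ring

theorem f63_eq (y : ℝ) :
    f6 3 y = -(1 / 3) * Real.sin y
      + (2 / 3) * Real.cosh (Real.sqrt 3 * y / 2) * Real.sin (y / 2) := by
  have hterm (p : ℕ) : ((√3 + I) / 2 * y : ℂ) ^ (3 + 6 * p) / (3 + 6 * p)! =
      (((-1) ^ p * y ^ (3 + 6 * p) / (3 + 6 * p)! : ℝ) : ℂ) * I := by
    rw [mul_pow, pow_add, pow_mul, show 6 = 3 * 2 from rfl, pow_mul,
      sqrt_three_add_I_div_two_pow_three, I_sq]
    push_cast
    ring
  have hfilter :=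
    isPrimitiveRoot_one_add_sqrt_three_mul_I_div_two.hasSum_pow_div_factorial_add_mul
      (by norm_num : 3 < 6) ((√3 + I) / 2 * y)
  rw [one_add_sqrt_three_mul_I_div_two_pow_three, inv_neg, inv_one,
    sum_range_six_neg_one_pow_mul_exp_sqrt_three_add_I_div_two] at hfilter
  simp only [hterm] at hfilter
  have hvalue (r : ℝ) : ((6 : ℕ) : ℂ)⁻¹ * ((r : ℂ) * I) = ((r / 6 : ℝ) : ℂ) * I := by
    push_cast
    ring
  rw [hvalue, hasSum_mul_right_iff I_ne_zero, hasSum_ofReal] at hfilter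
  rw [f6, hfilter.tsum_eq]
  ring
end

section
/- For every real y, the sum of squares of the six planar 6-dimensional cosexponential functions satisfies \sum_{k=0}^{5} f_{6k}(y)^2 = 1/3 + (2/3) cosh(\sqrt{3} y). -/
/-!
For `ω ^ 6 = -1`, splitting the exponential series by residues mod 6 gives
`exp (ω y) = ∑ k, ω ^ k f6 k y`. The six roots of `-1` are `η ζ ^ j` with `η = e^{iπ/6}` and
`ζ = η²` a primitive sixth root of unity, so the vector `(exp (η ζ ^ j y))_j` is the discrete
Fourier transform of `(η ^ k f6 k y)_k`. Parseval's identity turns `6 ∑ f6 k y ^ 2` into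
`∑ j |exp (η ζ ^ j y)|² = ∑ j exp (2 cos ((2j+1)π/6) y) = 2 + 4 cosh (√3 y)`.
-/

open Finset Complex ComplexConjugate
open scoped Real

theorem IsPrimitiveRoot.geom_sum_pow_mul_conj_pow {n : ℕ} {ζ : ℂ} (hζ : IsPrimitiveRoot ζ n)
    {k l : ℕ} (hk : k < n) (hl : l < n) :
    ∑ j ∈ range n, (ζ ^ k * conj ζ ^ l) ^ j = if k = l then (n : ℂ) else 0 := by
  have hζζ : ζ * conj ζ = 1 := by
    rw [mul_conj', hζ.norm'_eq_one (by omega)]; norm_num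
  split_ifs with hkl
  · subst hkl
    simp [← mul_pow, hζζ]
  · have hpow : (ζ ^ k * conj ζ ^ l) ^ n = 1 := by
      rw [mul_pow, ← pow_mul, ← pow_mul, mul_comm k, mul_comm l, pow_mul, pow_mul, ← map_pow,
        hζ.pow_eq_one, map_one, one_pow, one_pow, one_mul]
    have hne : ζ ^ k * conj ζ ^ l ≠ 1 := by
      intro h
      apply hkl (hζ.pow_inj hk hl _)
      calc ζ ^ k = ζ ^ k * (conj ζ * ζ) ^ l := by rw [mul_comm (conj ζ), hζζ, one_pow, mul_one]
        _ = (ζ ^ k * conj ζ ^ l) * ζ ^ l := by ring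
        _ = ζ ^ l := by rw [h, one_mul]
    rw [geom_sum_eq hne, hpow, sub_self, zero_div]

theorem IsPrimitiveRoot.sum_norm_sq_sum_pow_mul {n : ℕ} {ζ : ℂ} (hζ : IsPrimitiveRoot ζ n)
    (a : ℕ → ℂ) :
    ∑ j ∈ range n, ‖∑ k ∈ range n, ζ ^ (j * k) * a k‖ ^ 2 = n * ∑ k ∈ range n, ‖a k‖ ^ 2 := by
  apply ofReal_injective
  push_cast
  simp_rw [← mul_conj', map_sum, map_mul, map_pow, sum_mul_sum, mul_sum]
  rw [sum_comm]
  refine sum_congr rfl fun k hk => ?_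
  rw [sum_comm]
  calc ∑ l ∈ range n, ∑ j ∈ range n, ζ ^ (j * k) * a k * (conj ζ ^ (j * l) * conj (a l))
      = ∑ l ∈ range n, a k * conj (a l) * ∑ j ∈ range n, (ζ ^ k * conj ζ ^ l) ^ j := by
        simp_rw [mul_sum]
        refine sum_congr rfl fun l _ => sum_congr rfl fun j _ => by ring
    _ = n * (a k * conj (a k)) := by
        rw [sum_congr rfl fun l hl => by
          rw [hζ.geom_sum_pow_mul_conj_pow (mem_range.1 hk) (mem_range.1 hl)]]
        simp [mul_comm, hk]

theorem cexp_mul_eq_sum_f6 {ω : ℂ} (hω : ω ^ 6 = -1) (y : ℝ) :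
    exp (ω * y) = ∑ k ∈ range 6, ω ^ k * f6 k y := by
  rw [exp_eq_exp_ℂ, NormedSpace.exp_eq_tsum_div]
  dsimp only
  rw [Nat.sumByResidueClasses (NormedSpace.expSeries_div_summable (ω * (y : ℂ))) 6,
    ← Fin.sum_univ_eq_sum_range]
  refine Fintype.sum_congr _ _ fun k => ?_
  rw [f6, ofReal_tsum, ← tsum_mul_left]
  refine tsum_congr fun p => ?_
  rw [mul_pow, pow_add ω, pow_mul, hω]
  push_cast
  rw [show ZMod.val k = Fin.val k from rfl]
  ring

theorem six_mul_sum_sq_f6 (y : ℝ) :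
    6 * ∑ k ∈ range 6, f6 k y ^ 2 =
      ∑ j ∈ range 6, Real.exp (2 * Real.cos ((2 * j + 1) * (π / 6)) * y) := by
  set η := exp (↑(π / 6) * I)
  have hη_pow (m : ℕ) : η ^ m = exp (↑(m * (π / 6)) * I) := by
    rw [← exp_nat_mul]; push_cast; ring_nf
  have hη_norm : ‖η‖ = 1 := norm_exp_ofReal_mul_I _
  have hη6 : η ^ 6 = -1 := by
    rw [hη_pow, show ((6 : ℕ) : ℝ) * (π / 6) = π by push_cast; ring, exp_pi_mul_I]
  have hη2 : IsPrimitiveRoot (η ^ 2) 6 := by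
    convert isPrimitiveRoot_exp 6 (by norm_num) using 1
    rw [hη_pow]; push_cast; ring_nf
  calc 6 * ∑ k ∈ range 6, f6 k y ^ 2 = 6 * ∑ k ∈ range 6, ‖η ^ k * f6 k y‖ ^ 2 := by
        simp [norm_pow, hη_norm]
    _ = ∑ j ∈ range 6, ‖∑ k ∈ range 6, (η ^ 2) ^ (j * k) * (η ^ k * f6 k y)‖ ^ 2 := by
        exact_mod_cast (hη2.sum_norm_sq_sum_pow_mul fun k => η ^ k * f6 k y).symm
    _ = ∑ j ∈ range 6, ‖exp (η ^ (2 * j + 1) * y)‖ ^ 2 := by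
        refine sum_congr rfl fun j _ => ?_
        have hroot : (η ^ (2 * j + 1)) ^ 6 = -1 := by
          rw [← pow_mul, mul_comm, pow_mul, hη6, Odd.neg_one_pow ⟨j, rfl⟩]
        rw [cexp_mul_eq_sum_f6 hroot]
        congr 2
        exact sum_congr rfl fun k _ => by ring
    _ = ∑ j ∈ range 6, Real.exp (2 * Real.cos ((2 * j + 1) * (π / 6)) * y) := by
        refine sum_congr rfl fun j _ => ?_
        rw [norm_exp, re_mul_ofReal, hη_pow, exp_ofReal_mul_I_re, ← Real.exp_nat_mul]
        push_cast
        ring_nf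

theorem sum_exp_two_mul_cos_odd_mul_pi_div_six (x : ℝ) :
    ∑ j ∈ range 6, Real.exp (2 * Real.cos ((2 * j + 1) * (π / 6)) * x) =
      2 + 4 * Real.cosh (√3 * x) := by
  have hc3 : Real.cos (3 * (π / 6)) = 0 := by
    rw [show 3 * (π / 6) = π / 2 by ring, Real.cos_pi_div_two]
  have hc5 : Real.cos (5 * (π / 6)) = -(√3 / 2) := by
    rw [show 5 * (π / 6) = π - π / 6 by ring, Real.cos_pi_sub, Real.cos_pi_div_six]
  have hc7 : Real.cos (7 * (π / 6)) = -(√3 / 2) := by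
    rw [show 7 * (π / 6) = π / 6 + π by ring, Real.cos_add_pi, Real.cos_pi_div_six]
  have hc9 : Real.cos (9 * (π / 6)) = 0 := by
    rw [show 9 * (π / 6) = π / 2 + π by ring, Real.cos_add_pi, Real.cos_pi_div_two, neg_zero]
  have hc11 : Real.cos (11 * (π / 6)) = √3 / 2 := by
    rw [show 11 * (π / 6) = 2 * π - π / 6 by ring, Real.cos_two_pi_sub, Real.cos_pi_div_six]
  simp only [sum_range_succ, sum_range_zero]
  norm_num [hc3, hc5, hc7, hc9, hc11, Real.cosh_eq]
  ring_nf

theorem f6_sum_sq (y : ℝ) :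
    ∑ k ∈ Finset.range 6, (f6 k y) ^ 2
      = 1 / 3 + (2 / 3) * Real.cosh (Real.sqrt 3 * y) := by
  have h := six_mul_sum_sq_f6 y
  rw [sum_exp_two_mul_cos_odd_mul_pi_div_six] at h
  linarith
end

section
/- For every real y, the planar 6-dimensional cosexponential function satisfies f_{6k}(y) = (1/6) \sum_{l=1}^{6} exp(y cos(\pi(2l-1)/6)) cos(y sin(\pi(2l-1)/6) - \pi(2l-1)k/6), for each k = 0,...,5. -/
open Complex Finset

noncomputable def cosexp (N k : ℕ) (y : ℝ) : ℝ :=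
  ∑' p : ℕ, (-1 : ℝ) ^ p * y ^ (k + N * p) / ((k + N * p).factorial : ℝ)

noncomputable def negOneRootArg (N l : ℕ) : ℝ := Real.pi * (2 * (l : ℝ) - 1) / N

noncomputable def negOneRoot (N l : ℕ) : ℂ := exp (negOneRootArg N l * I)

section

variable {N k l : ℕ}

theorem negOneRoot_zpow (m : ℤ) : negOneRoot N l ^ m = exp (m * negOneRootArg N l * I) := by
  rw [negOneRoot, ← exp_int_mul, mul_assoc]

theorem negOneRoot_ne_zero : negOneRoot N l ≠ 0 := exp_ne_zero _

theorem negOneRoot_succ (j : ℕ) :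
    negOneRoot N (j + 1) = exp (Real.pi * I / N) * exp (2 * Real.pi * I / N) ^ j := by
  rw [negOneRoot, negOneRootArg, ← exp_nat_mul, ← exp_add]
  push_cast
  ring_nf

theorem negOneRoot_pow_self (hN : N ≠ 0) : negOneRoot N l ^ N = -1 := by
  have h : ((N : ℤ) : ℂ) * negOneRootArg N l * I = l * (2 * Real.pi * I) - Real.pi * I := by
    rw [negOneRootArg]
    push_cast
    field_simp
  rw [← zpow_natCast, negOneRoot_zpow, h, exp_sub, exp_nat_mul, exp_two_pi_mul_I, exp_pi_mul_I]
  simp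

theorem sum_negOneRoot_pow_self_mul (hN : N ≠ 0) (p : ℕ) :
    ∑ l ∈ Icc 1 N, negOneRoot N l ^ (N * p) = N * (-1) ^ p := by
  simp [pow_mul, negOneRoot_pow_self hN]

theorem sum_negOneRoot_zpow_eq_zero (hN : N ≠ 0) {m : ℤ} (hm : ¬ (N : ℤ) ∣ m) :
    ∑ l ∈ Icc 1 N, negOneRoot N l ^ m = 0 := by
  set ζ := exp (2 * Real.pi * I / N)
  have hζ : IsPrimitiveRoot ζ N := isPrimitiveRoot_exp N hN
  have hζm : ζ ^ m ≠ 1 := by rwa [Ne, hζ.zpow_eq_one_iff_dvd]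
  have hζmN : (ζ ^ m) ^ N = 1 := by
    rw [← zpow_natCast, ← zpow_mul, mul_comm, zpow_mul, zpow_natCast, hζ.pow_eq_one, one_zpow]
  have hterm (j : ℕ) : negOneRoot N (1 + j) ^ m = exp (Real.pi * I / N) ^ m * (ζ ^ m) ^ j := by
    rw [add_comm, negOneRoot_succ, mul_zpow, ← zpow_natCast, ← zpow_mul, mul_comm (j : ℤ),
      zpow_mul, zpow_natCast]
  rw [← Ico_add_one_right_eq_Icc, sum_Ico_eq_sum_range, Nat.add_sub_cancel]
  simp_rw [hterm, ← mul_sum, geom_sum_eq hζm, hζmN, sub_self, zero_div, mul_zero]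

theorem hasSum_exp_mul_negOneRoot_zpow (y : ℂ) :
    HasSum (fun n : ℕ => y ^ n / n.factorial * negOneRoot N l ^ ((n : ℤ) - k))
      (exp (y * negOneRoot N l) * negOneRoot N l ^ (-(k : ℤ))) := by
  rw [exp_eq_exp_ℂ]
  refine ((NormedSpace.expSeries_div_hasSum_exp (y * negOneRoot N l)).mul_right
    (negOneRoot N l ^ (-(k : ℤ)))).congr_fun fun n => ?_
  rw [sub_eq_add_neg, zpow_add₀ negOneRoot_ne_zero, zpow_natCast, mul_pow]
  ring

theorem natCast_dvd_sub_iff_mem_range_add_mul (hk : k < N) (n : ℕ) :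
    (N : ℤ) ∣ (n : ℤ) - k ↔ n ∈ Set.range (fun p => k + N * p) := by
  rw [← Nat.modEq_iff_dvd]
  constructor
  · intro h
    have hn : n % N = k := Eq.trans (Nat.ModEq.symm h) (Nat.mod_eq_of_lt hk)
    exact ⟨n / N, by have := Nat.mod_add_div n N; dsimp only; omega⟩
  · rintro ⟨p, rfl⟩
    simp [Nat.ModEq]

theorem hasSum_cosexp_series (hk : k < N) (y : ℂ) :
    HasSum (fun p : ℕ => (-1) ^ p * y ^ (k + N * p) / (k + N * p).factorial)
      ((1 / N) * ∑ l ∈ Icc 1 N, exp (y * negOneRoot N l) * negOneRoot N l ^ (-(k : ℤ))) := by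
  have hN : N ≠ 0 := by omega
  have h := (hasSum_sum (s := Icc 1 N) fun l _ =>
    hasSum_exp_mul_negOneRoot_zpow (N := N) (k := k) (l := l) y).mul_left (1 / N : ℂ)
  simp_rw [← mul_sum] at h
  have hinj : Function.Injective (fun p => k + N * p) := fun p q hpq => by
    simpa [hN] using hpq
  rw [← hinj.hasSum_iff fun n hn => by
    rw [sum_negOneRoot_zpow_eq_zero hN (mt (natCast_dvd_sub_iff_mem_range_add_mul hk n).1 hn),
      mul_zero, mul_zero]] at h
  refine h.congr_fun fun p => ?_
  have hexp : ((k + N * p : ℕ) : ℤ) - k = ((N * p : ℕ) : ℤ) := by push_cast; ring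
  simp only [Function.comp_apply, hexp, zpow_natCast, sum_negOneRoot_pow_self_mul hN]
  field_simp

theorem re_exp_mul_negOneRoot_zpow (y : ℝ) :
    (exp (y * negOneRoot N l) * negOneRoot N l ^ (-(k : ℤ))).re
      = Real.exp (y * Real.cos (negOneRootArg N l))
        * Real.cos (y * Real.sin (negOneRootArg N l) - negOneRootArg N l * k) := by
  have h : exp (y * negOneRoot N l) * negOneRoot N l ^ (-(k : ℤ))
      = Real.exp (y * Real.cos (negOneRootArg N l))
        * exp ((y * Real.sin (negOneRootArg N l) - negOneRootArg N l * k : ℝ) * I) := by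
    rw [negOneRoot_zpow, negOneRoot, exp_mul_I, ofReal_exp, ← exp_add, ← exp_add]
    congr 1
    push_cast
    ring
  rw [h, re_ofReal_mul, exp_ofReal_mul_I_re]

theorem cosexp_eq_sum_exp_mul_cos (hk : k < N) (y : ℝ) :
    cosexp N k y = (1 / N) * ∑ l ∈ Icc 1 N, Real.exp (y * Real.cos (negOneRootArg N l))
      * Real.cos (y * Real.sin (negOneRootArg N l) - negOneRootArg N l * k) := by
  have h := hasSum_re (hasSum_cosexp_series hk (y : ℂ))
  rw [show (1 / N : ℂ) = ((1 / N : ℝ) : ℂ) by simp, re_ofReal_mul, re_sum] at h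
  simp only [re_exp_mul_negOneRoot_zpow] at h
  refine (h.congr_fun fun p => ?_).tsum_eq
  exact_mod_cast (ofReal_re ((-1 : ℝ) ^ p * y ^ (k + N * p) / (k + N * p).factorial)).symm

end

theorem f6_trig_sum (y : ℝ) (k : ℕ) (hk : k < 6) :
    f6 k y = (1 / 6) * ∑ l ∈ Finset.Icc (1:ℕ) 6,
      Real.exp (y * Real.cos (Real.pi * (2 * (l:ℝ) - 1) / 6))
        * Real.cos (y * Real.sin (Real.pi * (2 * (l:ℝ) - 1) / 6) - Real.pi * (2 * (l:ℝ) - 1) * k / 6) := by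
  have h := cosexp_eq_sum_exp_mul_cos hk y
  simp only [negOneRootArg, Nat.cast_ofNat, div_mul_eq_mul_div _ _ (k : ℝ)] at h
  exact h
end

section
/- In the ring of planar 6-complex numbers R[x]/(x^6 + 1), the modulus d(u) = (\sum_{k=0}^5 x_k^2)^{1/2} of u = x_0 + h x_1 + ... + h^5 x_5 satisfies d(u u') \le \sqrt{3} d(u) d(u') for all u, u'. -/
noncomputable def planar6 : Type :=
  AdjoinRoot ((Polynomial.X : Polynomial ℝ) ^ 6 + 1)

noncomputable instance : CommRing planar6 := AdjoinRoot.instCommRing _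

noncomputable instance : Algebra ℝ planar6 := AdjoinRoot.instAlgebra _

noncomputable def h6 : planar6 := AdjoinRoot.root _

/-!
Evaluation at a root `ζ` of `X⁶ + 1` is a ring homomorphism `planar6 → ℂ`. For the three roots
`e^{iπ/6}, i, e^{5iπ/6}` (the other three are their conjugates) Parseval's identity reads
`3 d(u)² = ∑ⱼ |u(ζⱼ)|²`, hence
`3 d(uu')² = ∑ⱼ |u(ζⱼ)|² |u'(ζⱼ)|² ≤ (∑ⱼ |u(ζⱼ)|²) (∑ⱼ |u'(ζⱼ)|²) = 9 d(u)² d(u')²`.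
-/

open Complex

theorem Finset.sum_mul_le_sum_mul_sum {ι R : Type*} [Semiring R] [PartialOrder R]
    [IsOrderedRing R] (s : Finset ι) {f g : ι → R}
    (hf : ∀ i ∈ s, 0 ≤ f i) (hg : ∀ i ∈ s, 0 ≤ g i) :
    ∑ i ∈ s, f i * g i ≤ (∑ i ∈ s, f i) * ∑ i ∈ s, g i := by
  rw [Finset.sum_mul]
  exact Finset.sum_le_sum fun i hi =>
    mul_le_mul_of_nonneg_left (Finset.single_le_sum hg hi) (hf i hi)

noncomputable def evalCoeffs {n : ℕ} (a : Fin n → ℝ) (ζ : ℂ) : ℂ :=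
  ∑ k, (a k : ℂ) * ζ ^ (k : ℕ)

theorem evalCoeffs_fin_six (a : Fin 6 → ℝ) (ζ : ℂ) : evalCoeffs a ζ =
    a 0 + a 1 * ζ + a 2 * ζ ^ 2 + a 3 * ζ ^ 3 + a 4 * ζ ^ 4 + a 5 * ζ ^ 5 := by
  simp [evalCoeffs, Fin.sum_univ_six]

namespace planar6

noncomputable def evalAt (ζ : ℂ) (hζ : ζ ^ 6 = -1) : planar6 →ₐ[ℝ] ℂ :=
  AdjoinRoot.liftAlgHom _ (Algebra.ofId ℝ ℂ) ζ (by simp [hζ])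

theorem evalAt_h6 (ζ : ℂ) (hζ : ζ ^ 6 = -1) : evalAt ζ hζ h6 = ζ :=
  AdjoinRoot.liftAlgHom_root _ _ _ _

theorem evalAt_sum {n : ℕ} (ζ : ℂ) (hζ : ζ ^ 6 = -1) (a : Fin n → ℝ) :
    evalAt ζ hζ (∑ k, algebraMap ℝ planar6 (a k) * h6 ^ (k : ℕ)) = evalCoeffs a ζ := by
  simp [evalCoeffs, evalAt_h6]

end planar6

/-- For `s = √3` and `s = -√3` this is `e^{iπ/6}` and `e^{5iπ/6}` respectively. -/
noncomputable def sixthRootNegOne (s : ℝ) : ℂ := ⟨s / 2, 1 / 2⟩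

theorem sixthRootNegOne_sq {s : ℝ} (hs : s ^ 2 = 3) :
    sixthRootNegOne s ^ 2 = ⟨1 / 2, s / 2⟩ := by
  apply Complex.ext <;> simp only [sixthRootNegOne, sq, mul_re, mul_im]
  · linear_combination hs / 4
  · ring

theorem sixthRootNegOne_pow_three {s : ℝ} (hs : s ^ 2 = 3) : sixthRootNegOne s ^ 3 = I := by
  rw [pow_succ, sixthRootNegOne_sq hs]
  apply Complex.ext <;> simp only [sixthRootNegOne, mul_re, mul_im, I_re, I_im]
  · ring
  · linear_combination hs / 4

theorem sixthRootNegOne_pow_six {s : ℝ} (hs : s ^ 2 = 3) : sixthRootNegOne s ^ 6 = -1 := by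
  rw [show 6 = 3 * 2 by rfl, pow_mul, sixthRootNegOne_pow_three hs, I_sq]

theorem evalCoeffs_sixthRootNegOne {s : ℝ} (hs : s ^ 2 = 3) (a : Fin 6 → ℝ) :
    evalCoeffs a (sixthRootNegOne s) =
      ⟨a 0 + a 2 / 2 - a 4 / 2 + s * ((a 1 - a 5) / 2),
        a 1 / 2 + a 3 + a 5 / 2 + s * ((a 2 + a 4) / 2)⟩ := by
  have h4 : sixthRootNegOne s ^ 4 = I * sixthRootNegOne s := by
    rw [pow_succ, sixthRootNegOne_pow_three hs]
  have h5 : sixthRootNegOne s ^ 5 = I * sixthRootNegOne s ^ 2 := by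
    rw [pow_succ, pow_succ, sixthRootNegOne_pow_three hs, mul_assoc, ← sq]
  rw [evalCoeffs_fin_six, h5, h4, sixthRootNegOne_pow_three hs, sixthRootNegOne_sq hs]
  apply Complex.ext <;>
    simp only [sixthRootNegOne, add_re, add_im, mul_re, mul_im, ofReal_re, ofReal_im, I_re, I_im] <;>
    ring

theorem evalCoeffs_I (a : Fin 6 → ℝ) :
    evalCoeffs a I = ⟨a 0 - a 2 + a 4, a 1 - a 3 + a 5⟩ := by
  rw [evalCoeffs_fin_six, pow_succ I 4, I_pow_four, I_pow_three, I_sq]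
  apply Complex.ext <;>
    simp only [add_re, add_im, mul_re, mul_im, neg_re, neg_im, one_re, one_im, ofReal_re,
      ofReal_im, I_re, I_im] <;>
    ring

noncomputable def upperSixthRootsNegOne : Fin 3 → ℂ :=
  ![sixthRootNegOne √3, I, sixthRootNegOne (-√3)]

theorem upperSixthRootsNegOne_pow_six (j : Fin 3) : upperSixthRootsNegOne j ^ 6 = -1 := by
  have hs : √3 ^ 2 = 3 := Real.sq_sqrt (by norm_num)
  fin_cases j
  · exact sixthRootNegOne_pow_six hs
  · norm_num [upperSixthRootsNegOne, pow_succ]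
  · exact sixthRootNegOne_pow_six (by rwa [neg_sq])

theorem sum_normSq_evalCoeffs_upperSixthRootsNegOne (a : Fin 6 → ℝ) :
    ∑ j, normSq (evalCoeffs a (upperSixthRootsNegOne j)) = 3 * ∑ k, a k ^ 2 := by
  have hs : √3 ^ 2 = 3 := Real.sq_sqrt (by norm_num)
  simp only [Fin.sum_univ_three, upperSixthRootsNegOne, Matrix.cons_val_zero,
    Matrix.cons_val_one, Matrix.cons_val_two, Matrix.head_cons, Matrix.tail_cons,
    evalCoeffs_I, evalCoeffs_sixthRootNegOne hs,
    evalCoeffs_sixthRootNegOne (s := -√3) (by rwa [neg_sq]), normSq_mk, Fin.sum_univ_six]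
  linear_combination ((a 1 - a 5) ^ 2 + (a 2 + a 4) ^ 2) / 2 * hs

theorem planar6_modulus_mul_le (x x' z : Fin 6 → ℝ)
    (hz : (∑ k : Fin 6, algebraMap ℝ planar6 (x k) * h6 ^ (k : ℕ))
        * (∑ k : Fin 6, algebraMap ℝ planar6 (x' k) * h6 ^ (k : ℕ))
        = ∑ k : Fin 6, algebraMap ℝ planar6 (z k) * h6 ^ (k : ℕ)) :
    Real.sqrt (∑ k : Fin 6, z k ^ 2)
      ≤ Real.sqrt 3 * Real.sqrt (∑ k : Fin 6, x k ^ 2)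
        * Real.sqrt (∑ k : Fin 6, x' k ^ 2) := by
  have heval (j : Fin 3) : evalCoeffs z (upperSixthRootsNegOne j)
      = evalCoeffs x (upperSixthRootsNegOne j) * evalCoeffs x' (upperSixthRootsNegOne j) := by
    have := congrArg (planar6.evalAt _ (upperSixthRootsNegOne_pow_six j)) hz
    simpa only [map_mul, planar6.evalAt_sum] using this.symm
  have hsq : 3 * ∑ k, z k ^ 2 ≤ (3 * ∑ k, x k ^ 2) * (3 * ∑ k, x' k ^ 2) := by
    simp only [← sum_normSq_evalCoeffs_upperSixthRootsNegOne, heval, normSq_mul]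
    exact Finset.sum_mul_le_sum_mul_sum _ (fun _ _ => normSq_nonneg _)
      (fun _ _ => normSq_nonneg _)
  rw [← Real.sqrt_mul (by norm_num), ← Real.sqrt_mul (by positivity)]
  exact Real.sqrt_le_sqrt (by linarith)
end
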